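/- arXiv:math/0508240 — 4 statements merged into one kernel-verified Lean document; each statement's English description precedes it below -/
import Mathlib

section
/- Let B be a circuitous base of a matroid M, and let F ⊂ G be flats of M each spanned by a subset of B. If the restriction M|G is connected, then the quotient matroid G/F (the contraction of F in the restriction to G) is also connected. -/
open Set Matroid

namespace BergmanPaper

variable {α : Type*}

/-- A circuit of a matroid: a minimal dependent set. -/
def MCircuit (M : Matroid α) (C : Set α) : Prop :=
  M.Dep C ∧ ∀ x ∈ C, M.Indep (C \ {x})

/-- The rank of a set in a matroid (supremum of cardinalities of independent subsets). -/
noncomputable def mrank (M : Matroid α) (X : Set α) : ℕ :=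
  sSup {n | ∃ I, M.Indep I ∧ I ⊆ X ∧ I.ncard = n}

/-- Two elements are connected in `M` if they are joined by a chain of circuits. -/
def ConnTo (M : Matroid α) : α → α → Prop :=
  Relation.ReflTransGen fun x y => ∃ C, MCircuit M C ∧ x ∈ C ∧ y ∈ C

/-- A connected matroid: nonempty ground set, any two elements joined by circuits. -/
def MConnected (M : Matroid α) : Prop :=
  M.E.Nonempty ∧ ∀ e ∈ M.E, ∀ f ∈ M.E, ConnTo M e f

/-- `C` is a connected component of the restriction of `M` to `F`. -/
def IsCompOf (M : Matroid α) (C F : Set α) : Prop :=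
  ∃ e ∈ F, C = {f | f ∈ F ∧ ConnTo (M ↾ F) e f}

/-- Independence in the minor `(M ↾ G) ／ F` (restrict to `G`, then contract `F ⊆ G`):
`I` is independent iff `I ⊆ G \ F` and `I ∪ J` is independent for a basis `J` of `F`. -/
def minorIndep (M : Matroid α) (G F I : Set α) : Prop :=
  I ⊆ G \ F ∧ ∃ J, M.IsBasis J F ∧ M.Indep (I ∪ J)

/-- `F` is spanned by a subset of `B`. -/
def SpannedBy (M : Matroid α) (F B : Set α) : Prop :=
  ∃ I ⊆ B, M.closure I = F

/-- A base `B` is circuitous if every connected flat spanned by a subset of `B` is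
spanned by the basic circuit `circ(B, e)` for some `e ∈ E \ B`. -/
def Circuitous (M : Matroid α) (B : Set α) : Prop :=
  M.IsBase B ∧ ∀ F, M.IsFlat F → MConnected (M ↾ F) → SpannedBy M F B →
    ∃ e ∈ M.E \ B, ∃ C, C ⊆ insert e B ∧ MCircuit M C ∧ M.closure C = F

/-- A flag of flats `∅ = F₀ ⊂ F₁ ⊂ ⋯ ⊂ F_k ⊂ F_{k+1} = E`. -/
structure IsFlag (M : Matroid α) (k : ℕ) (Fl : Fin (k + 2) → Set α) : Prop where
  first : Fl 0 = ∅
  last : Fl (Fin.last (k + 1)) = M.E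
  mono : StrictMono Fl
  flat : ∀ i, i ≠ 0 → M.IsFlat (Fl i)

/-- Independence in the matroid `M_𝓕 = ⊕ᵢ (M ↾ Fᵢ) ／ Fᵢ₋₁` associated to a flag. -/
def flagIndep (M : Matroid α) (k : ℕ) (Fl : Fin (k + 2) → Set α) (I : Set α) : Prop :=
  I ⊆ M.E ∧ ∀ i : Fin (k + 1),
    minorIndep M (Fl i.succ) (Fl i.castSucc) (I ∩ (Fl i.succ \ Fl i.castSucc))

/-- The labels of the forest `T_𝓕`: all connected components of all flats in the flag. -/
def forestLabels (M : Matroid α) (k : ℕ) (Fl : Fin (k + 2) → Set α) : Set (Set α) :=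
  {C | ∃ i, IsCompOf M C (Fl i)}

/-- The join of a family of flats in the lattice of flats. -/
def flatJoin (M : Matroid α) (A : Set (Set α)) : Set α :=
  M.closure (⋃₀ A)

/-- A nested set: a set of connected flats such that the join of every antichain with at
least two elements is not connected. -/
def IsNestedSet (M : Matroid α) (N : Set (Set α)) : Prop :=
  (∀ F ∈ N, M.IsFlat F ∧ MConnected (M ↾ F)) ∧
    ∀ A ⊆ N, IsAntichain (· ⊆ ·) A → ¬ A.Subsingleton →
      ¬ MConnected (M ↾ flatJoin M A)

/-- A chain of flats of `M`. -/
def IsFlagChain (M : Matroid α) (k : ℕ) (Fl : Fin k → Set α) : Prop :=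
  (∀ i, M.IsFlat (Fl i)) ∧ StrictMono Fl

/-- The labels of the forest of a chain of flats. -/
def chainLabels (M : Matroid α) (k : ℕ) (Fl : Fin k → Set α) : Set (Set α) :=
  {C | ∃ i, IsCompOf M C (Fl i)}

/-- `μ` is the Möbius function of the lattice of flats of `M`, computed from the bottom. -/
def IsMobius (M : Matroid α) (μ : Set α → ℤ) : Prop :=
  μ (M.closure ∅) = 1 ∧
    ∀ X, M.IsFlat X → X ≠ M.closure ∅ → (∑ᶠ Y ∈ {Y | M.IsFlat Y ∧ Y ⊆ X}, μ Y) = 0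

/-- The beta invariant `β(M) = (−1)^{r(M)} Σ_X μ(X) r(X)`, the sum over all flats. -/
noncomputable def betaInv (M : Matroid α) (μ : Set α → ℤ) : ℤ :=
  (-1) ^ mrank M M.E * ∑ᶠ X ∈ {X | M.IsFlat X}, μ X * (mrank M X : ℤ)

/-- Contraction independence does not depend on the choice of basis of the flat. -/
lemma wd_aux {M : Matroid α} {F I J J' : Set α} (hIE : I ⊆ M.E) (hIF : Disjoint I F)
    (hJ : M.IsBasis J F) (hJ' : M.IsBasis J' F) (h : M.Indep (I ∪ J)) : M.Indep (I ∪ J') := by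
  have hFE : F ⊆ M.E := hJ.subset_ground
  have hXE : I ∪ F ⊆ M.E := union_subset hIE hFE
  obtain ⟨B', hB', hJ'B'⟩ := hJ'.indep.subset_isBasis_of_subset
    (hJ'.subset.trans subset_union_right) hXE
  have hB'F : B' ∩ F ⊆ J' := by
    intro b hb
    by_contra hbJ'
    have hbcl : b ∈ M.closure (B' \ {b}) := by
      have hb1 : b ∈ M.closure J' := hJ'.subset_closure hb.2
      have hsub : J' ⊆ B' \ {b} :=
        fun y hy => ⟨hJ'B' hy, fun h2 => hbJ' (mem_singleton_iff.1 h2 ▸ hy)⟩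
      exact M.closure_subset_closure hsub hb1
    exact hB'.indep.notMem_closure_diff_of_mem hb.1 hbcl
  have hIB' : I ⊆ B' := by
    intro i hi
    by_contra hiB'
    have hicl : i ∈ M.closure B' := hB'.subset_closure (Or.inl hi)
    have hsub : B' ⊆ M.closure ((I ∪ J) \ {i}) := by
      intro b hb
      rcases hB'.subset hb with hbI | hbF
      · refine M.subset_closure _ (diff_subset.trans (union_subset hIE hJ.indep.subset_ground)) ?_
        exact ⟨Or.inl hbI, fun h2 => hiB' (mem_singleton_iff.1 h2 ▸ hb)⟩
      · have hbJ : b ∈ M.closure J := hJ.subset_closure hbF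
        have hsub2 : J ⊆ (I ∪ J) \ {i} := fun y hy =>
          ⟨Or.inr hy, fun h2 => (hIF.ne_of_mem hi (hJ.subset hy)) (mem_singleton_iff.1 h2).symm⟩
        exact M.closure_subset_closure hsub2 hbJ
    have := M.closure_subset_closure_of_subset_closure hsub hicl
    exact h.notMem_closure_diff_of_mem (Or.inl hi) this
  exact hB'.indep.subset (union_subset hIB' hJ'B')

/-- Every dependent extension of an independent set contains a (fundamental) circuit
through the new element. -/
lemma exists_mcircuit {N : Matroid α} {S : Set α} {x : α} (hS : N.Indep S) (hxS : x ∉ S)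
    (hdep : N.Dep (insert x S)) : ∃ Cx, Cx ⊆ insert x S ∧ x ∈ Cx ∧ MCircuit N Cx := by
  have hxE : x ∈ N.E := hdep.subset_ground (mem_insert _ _)
  have hxcl : x ∈ N.closure S := hS.mem_closure_iff.2 (Or.inl hdep)
  set Js : Set (Set α) := {J | J ⊆ S ∧ x ∈ N.closure J} with hJsdef
  have hSJs : S ∈ Js := ⟨Subset.rfl, hxcl⟩
  have hne : Js.Nonempty := ⟨S, hSJs⟩
  have hUn : N.Indep (⋃₀ Js) := hS.subset (sUnion_subset fun J hJ => hJ.1)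
  have hclInt : N.closure (⋂₀ Js) = ⋂ J ∈ Js, N.closure J :=
    N.closure_sInter_eq_biInter_closure_of_sUnion_indep Js hne hUn
  have hxInt : x ∈ N.closure (⋂₀ Js) := by
    rw [hclInt]; exact mem_iInter₂.2 fun J hJ => hJ.2
  have hJ₀S : ⋂₀ Js ⊆ S := sInter_subset_of_mem hSJs
  have hJ₀i : N.Indep (⋂₀ Js) := hS.subset hJ₀S
  have hxJ₀ : x ∉ ⋂₀ Js := fun h => hxS (hJ₀S h)
  refine ⟨insert x (⋂₀ Js), insert_subset_insert hJ₀S, mem_insert _ _, ?_, ?_⟩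
  · rw [Matroid.dep_iff]
    refine ⟨?_, insert_subset hxE (hJ₀S.trans hS.subset_ground)⟩
    intro hind
    exact ((hJ₀i.insert_indep_iff_of_notMem hxJ₀).1 hind).2 hxInt
  · intro y hy
    rcases eq_or_ne y x with rfl | hyx
    · rwa [insert_diff_self_of_notMem hxJ₀]
    · have hyJ₀ : y ∈ ⋂₀ Js := (mem_insert_iff.1 hy).resolve_left hyx
      have hxncl : x ∉ N.closure ((⋂₀ Js) \ {y}) := by
        intro hmem
        have hmem2 : (⋂₀ Js) \ {y} ∈ Js := ⟨diff_subset.trans hJ₀S, hmem⟩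
        exact ((sInter_subset_of_mem hmem2) hyJ₀).2 rfl
      rw [← insert_diff_singleton_comm hyx.symm]
      exact ((hJ₀i.subset diff_subset).insert_indep_iff_of_notMem
        (fun h => hxJ₀ h.1)).2 ⟨hxE, hxncl⟩

/-- for flats `F ⊂ G` spanned by subsets of a circuitous base `B`, with `G`
connected, the quotient `G/F` is connected. -/
theorem circuitous_quotient_connected (M : Matroid α) (B : Set α) (hB : Circuitous M B)
    (F G : Set α) (hF : M.IsFlat F) (hG : M.IsFlat G) (hFG : F ⊂ G)
    (hFB : SpannedBy M F B) (hGB : SpannedBy M G B)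
    (hGconn : MConnected (M ↾ G))
    (Q : Matroid α) (hQE : Q.E = G \ F) (hQI : ∀ I, Q.Indep I ↔ minorIndep M G F I) :
    MConnected Q := by
  obtain ⟨hBbase, hcirc⟩ := hB
  obtain ⟨I₀, hI₀B, hI₀F⟩ := hFB
  have hI₀ : M.Indep I₀ := hBbase.indep.subset hI₀B
  have hI₀b : M.IsBasis I₀ F := hI₀F ▸ hI₀.isBasis_closure
  obtain ⟨e, heEB, C, hCeB, hC, hCcl⟩ := hcirc G hG hGconn hGB
  have hGE : G ⊆ M.E := hG.subset_ground
  have hCE : C ⊆ M.E := hC.1.subset_ground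
  have hCG : C ⊆ G := hCcl ▸ M.subset_closure C hCE
  have heC : e ∈ C := by
    by_contra h
    have hsub : C ⊆ B := fun c hc =>
      (mem_insert_iff.1 (hCeB hc)).resolve_left (fun hce => h (hce ▸ hc))
    exact hC.1.not_indep (hBbase.indep.subset hsub)
  have hCnF : ¬ C ⊆ F := by
    intro h
    refine hFG.not_subset ?_
    rw [← hCcl, ← hF.closure]
    exact M.closure_subset_closure h
  have hC'ne : (C \ F).Nonempty := diff_nonempty.2 hCnF
  have hzcl : ∀ z ∈ C, z ∈ M.closure (C \ {z}) := by
    intro z hz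
    refine (hC.2 z hz).mem_closure_iff.2 (Or.inl ?_)
    rw [insert_diff_singleton, insert_eq_self.2 hz]
    exact hC.1
  have hBI₀ : B ∩ F = I₀ := by
    apply Subset.antisymm
    · rintro b ⟨hbB, hbF⟩
      by_contra hbI₀
      have hins : M.Indep (insert b I₀) := hBbase.indep.subset (insert_subset hbB hI₀B)
      have h2 := ((hI₀.insert_indep_iff_of_notMem hbI₀).1 hins).2
      rw [hI₀F] at h2
      exact h2 hbF
    · exact subset_inter hI₀B hI₀b.subset
  have L1 : ∀ z ∈ C, z ≠ e → M.Indep (insert e (B \ {z})) := by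
    intro z hz hze
    have hzB : z ∈ B := (mem_insert_iff.1 (hCeB hz)).resolve_left hze
    have hBz : M.Indep (B \ {z}) := hBbase.indep.subset diff_subset
    have hecl : e ∉ M.closure (B \ {z}) := by
      intro hecl
      have h1 : C \ {z} ⊆ insert e (B \ {z}) := by
        rintro c ⟨hc, hcz⟩
        rcases mem_insert_iff.1 (hCeB hc) with rfl | hcB
        · exact mem_insert _ _
        · exact mem_insert_of_mem _ ⟨hcB, hcz⟩
      have h2 : M.closure (insert e (B \ {z})) = M.closure (B \ {z}) :=
        closure_insert_eq_of_mem_closure hecl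
      have h3 := M.closure_subset_closure h1 (hzcl z hz)
      rw [h2] at h3
      exact hBbase.indep.notMem_closure_diff_of_mem hzB h3
    exact (hBz.insert_indep_iff_of_notMem (fun h => heEB.2 h.1)).2 ⟨heEB.1, hecl⟩
  have heF : e ∉ F := by
    intro heF
    obtain ⟨z, hzC, hzF⟩ := hC'ne
    have hze : z ≠ e := fun h => hzF (h ▸ heF)
    have hzI₀ : z ∉ I₀ := fun h => hzF (hI₀b.subset h)
    have hDB : (C \ {e}) ∪ I₀ ⊆ B := by
      refine union_subset ?_ hI₀B
      rintro c ⟨hc, hce⟩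
      exact (mem_insert_iff.1 (hCeB hc)).resolve_left (fun h => hce h)
    have hDind : M.Indep ((C \ {e}) ∪ I₀) := hBbase.indep.subset hDB
    have hzD : z ∈ (C \ {e}) ∪ I₀ := Or.inl ⟨hzC, fun h => hze (mem_singleton_iff.1 h)⟩
    have heD : e ∈ M.closure (((C \ {e}) ∪ I₀) \ {z}) := by
      have hsub : I₀ ⊆ ((C \ {e}) ∪ I₀) \ {z} :=
        fun i hi => ⟨Or.inr hi, fun h => hzI₀ (mem_singleton_iff.1 h ▸ hi)⟩
      have h0 : e ∈ M.closure I₀ := by rw [hI₀F]; exact heF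
      exact M.closure_subset_closure hsub h0
    have h1 : C \ {z} ⊆ insert e (((C \ {e}) ∪ I₀) \ {z}) := by
      rintro c ⟨hc, hcz⟩
      rcases eq_or_ne c e with rfl | hce
      · exact mem_insert _ _
      · exact mem_insert_of_mem _ ⟨Or.inl ⟨hc, fun h => hce (mem_singleton_iff.1 h)⟩, hcz⟩
    have h2 := closure_insert_eq_of_mem_closure heD
    have h3 := M.closure_subset_closure h1 (hzcl z hzC)
    rw [h2] at h3
    exact hDind.notMem_closure_diff_of_mem hzD h3
  have heC' : e ∈ C \ F := ⟨heC, heF⟩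
  have hCsub : C ⊆ (C \ F) ∪ I₀ := by
    intro c hc
    by_cases hcF : c ∈ F
    · have hce : c ≠ e := fun h => heF (h ▸ hcF)
      have hcB : c ∈ B := (mem_insert_iff.1 (hCeB hc)).resolve_left hce
      exact Or.inr (hBI₀ ▸ (⟨hcB, hcF⟩ : c ∈ B ∩ F))
    · exact Or.inl ⟨hc, hcF⟩
  have L : ∀ z ∈ C \ F, M.Indep ((C \ F) \ {z} ∪ I₀) := by
    intro z hz
    rcases eq_or_ne z e with rfl | hze
    · refine hBbase.indep.subset (union_subset ?_ hI₀B)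
      rintro c ⟨⟨hcC, _⟩, hcz⟩
      exact (mem_insert_iff.1 (hCeB hcC)).resolve_left (fun h => hcz h)
    · refine (L1 z hz.1 hze).subset (union_subset ?_ ?_)
      · rintro c ⟨⟨hcC, _⟩, hcz⟩
        rcases mem_insert_iff.1 (hCeB hcC) with rfl | hcB
        · exact mem_insert _ _
        · exact mem_insert_of_mem _ ⟨hcB, hcz⟩
      · intro i hi
        refine mem_insert_of_mem _ ⟨hI₀B hi, fun h => hz.2 ?_⟩
        rw [← mem_singleton_iff.1 h]
        exact hI₀b.subset hi
  have Lsp : ∀ z ∈ C \ F, G ⊆ M.closure ((C \ F) \ {z} ∪ I₀) := by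
    intro z hz
    have hSE : (C \ F) \ {z} ∪ I₀ ⊆ M.E := (L z hz).subset_ground
    have hzS : z ∈ M.closure ((C \ F) \ {z} ∪ I₀) := by
      have h1 : C \ {z} ⊆ (C \ F) \ {z} ∪ I₀ := by
        rintro c ⟨hc, hcz⟩
        rcases hCsub hc with hcC' | hcI₀
        · exact Or.inl ⟨hcC', hcz⟩
        · exact Or.inr hcI₀
      exact M.closure_subset_closure h1 (hzcl z hz.1)
    have h2 : (C \ F) ∪ I₀ ⊆ M.closure ((C \ F) \ {z} ∪ I₀) := by
      rintro c (hc | hc)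
      · rcases eq_or_ne c z with rfl | hcz
        · exact hzS
        · exact M.subset_closure _ hSE (Or.inl ⟨hc, fun h => hcz (mem_singleton_iff.1 h)⟩)
      · exact M.subset_closure _ hSE (Or.inr hc)
    have h3 : C ⊆ M.closure ((C \ F) \ {z} ∪ I₀) := hCsub.trans h2
    rw [← hCcl]
    exact M.closure_subset_closure_of_subset_closure h3
  have hC'GF : C \ F ⊆ G \ F := fun c hc => ⟨hCG hc.1, hc.2⟩
  have qind : ∀ T : Set α, T ⊆ G \ F → M.Indep (T ∪ I₀) → Q.Indep T :=
    fun T hT h => (hQI T).2 ⟨hT, I₀, hI₀b, h⟩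
  have qdep : ∀ T : Set α, T ⊆ G \ F → ¬ M.Indep (T ∪ I₀) → Q.Dep T := by
    intro T hT hnind
    rw [Matroid.dep_iff, hQI T]
    refine ⟨?_, by rw [hQE]; exact hT⟩
    rintro ⟨-, J, hJ, hTJ⟩
    exact hnind (wd_aux (hT.trans (diff_subset.trans hGE))
      (disjoint_sdiff_left.mono_left hT) hJ hI₀b hTJ)
  have q1 : ∀ x ∈ G \ F, Q.Indep {x} := by
    intro x hx
    refine qind {x} (singleton_subset_iff.2 hx) ?_
    rw [singleton_union]
    have hxI₀ : x ∉ I₀ := fun h => hx.2 (hI₀b.subset h)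
    refine (hI₀.insert_indep_iff_of_notMem hxI₀).2 ⟨hGE hx.1, ?_⟩
    rw [hI₀F]
    exact hx.2
  have q2 : MCircuit Q (C \ F) := by
    constructor
    · refine Matroid.dep_iff.2 ⟨?_, by rw [hQE]; exact hC'GF⟩
      intro hQind
      obtain ⟨-, J, hJ, hind⟩ := (hQI _).1 hQind
      have hind2 : M.Indep ((C \ F) ∪ I₀) :=
        wd_aux (hC'GF.trans (diff_subset.trans hGE)) disjoint_sdiff_left hJ hI₀b hind
      exact hC.1.not_indep (hind2.subset hCsub)
    · intro z hz
      exact qind _ (diff_subset.trans hC'GF) (L z hz)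
  have q3 : ∀ x ∈ G \ F, x ∉ C \ F → Q.Dep (insert x ((C \ F) \ {e})) := by
    intro x hx hxC'
    refine qdep _ (insert_subset hx (diff_subset.trans hC'GF)) ?_
    intro hind
    rw [insert_union] at hind
    have hSind : M.Indep ((C \ F) \ {e} ∪ I₀) := L e heC'
    have hxS : x ∉ (C \ F) \ {e} ∪ I₀ := by
      rintro (hc | hc)
      · exact hxC' hc.1
      · exact hx.2 (hI₀b.subset hc)
    exact ((hSind.insert_indep_iff_of_notMem hxS).1 hind).2 (Lsp e heC' hx.1)
  have hsym : Symmetric (ConnTo Q) := by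
    letI : Std.Symm (fun x y : α => ∃ C, MCircuit Q C ∧ x ∈ C ∧ y ∈ C) :=
      ⟨fun a b ⟨Cc, h1, h2, h3⟩ => ⟨Cc, h1, h3, h2⟩⟩
    exact fun a b h => Std.Symm.symm (r := Relation.ReflTransGen _) a b h
  have key : ∀ x ∈ G \ F, ∃ w ∈ C \ F, ConnTo Q x w := by
    intro x hx
    by_cases hxC' : x ∈ C \ F
    · exact ⟨x, hxC', Relation.ReflTransGen.refl⟩
    · have hS : Q.Indep ((C \ F) \ {e}) := q2.2 e heC'
      have hdep : Q.Dep (insert x ((C \ F) \ {e})) := q3 x hx hxC'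
      obtain ⟨Cx, hCxsub, hxCx, hCx⟩ := exists_mcircuit hS (fun h => hxC' h.1) hdep
      have hex : ∃ w ∈ Cx, w ≠ x := by
        by_contra h
        push_neg at h
        have hCxx : Cx = {x} :=
          (subset_singleton_iff.2 h).antisymm (singleton_subset_iff.2 hxCx)
        rw [hCxx] at hCx
        exact hCx.1.not_indep (q1 x hx)
      obtain ⟨w, hwCx, hwx⟩ := hex
      have hwC' : w ∈ C \ F := ((mem_insert_iff.1 (hCxsub hwCx)).resolve_left hwx).1
      exact ⟨w, hwC', Relation.ReflTransGen.single ⟨Cx, hCx, hxCx, hwCx⟩⟩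
  constructor
  · rw [hQE]
    exact exists_of_ssubset hFG
  · intro a ha b hb
    rw [hQE] at ha hb
    obtain ⟨wa, hwa, hconna⟩ := key a ha
    obtain ⟨wb, hwb, hconnb⟩ := key b hb
    exact hconna.trans ((Relation.ReflTransGen.single ⟨C \ F, q2, hwa, hwb⟩).trans (hsym hconnb))

end BergmanPaper
end

section
/- Let B be a circuitous base of a matroid M, and let F ⊂ G be flats spanned by subsets I_F = F ∩ B and I_G = G ∩ B of B, with G connected. If e ∈ E \ B satisfies cl(circ(B,e)) = G, then in the quotient G/F, the set (I_G − I_F) ∪ {e} is the basic circuit of the base I_G − I_F with respect to e. -/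
open Set Matroid

namespace BergmanPaper

variable {α : Type*}

/-- if `cl (circ (B, e)) = G`, then in the quotient `G/F` the set
`(I_G − I_F) ∪ {e}` is the basic circuit of the base `I_G − I_F` with respect to `e`. -/
theorem basic_circuit_in_quotient (M : Matroid α) (B : Set α) (hB : Circuitous M B)
    (F G : Set α) (hF : M.IsFlat F) (hG : M.IsFlat G) (hFG : F ⊂ G)
    (hFB : M.closure (F ∩ B) = F) (hGB : M.closure (G ∩ B) = G)
    (hGconn : MConnected (M ↾ G)) (e : α) (he : e ∈ M.E \ B)
    (C : Set α) (hC : C ⊆ insert e B) (hCc : MCircuit M C) (hCG : M.closure C = G)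
    (Q : Matroid α) (hQE : Q.E = G \ F) (hQI : ∀ I, Q.Indep I ↔ minorIndep M G F I) :
    Q.IsBase ((G ∩ B) \ (F ∩ B)) ∧ MCircuit Q (insert e ((G ∩ B) \ (F ∩ B))) := by
  classical
  have hBbase := hB.1
  set IF := F ∩ B with hIFdef
  set IG := G ∩ B with hIGdef
  have hIGi : M.Indep IG := hBbase.indep.subset inter_subset_right
  have hIFi : M.Indep IF := hBbase.indep.subset inter_subset_right
  have hGE : G ⊆ M.E := hG.subset_ground
  have hFE : F ⊆ M.E := hF.subset_ground
  have hIGbasis : M.IsBasis IG G := hGB ▸ hIGi.isBasis_closure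
  have hIFbasis : M.IsBasis IF F := hFB ▸ hIFi.isBasis_closure
  have heB : e ∉ B := he.2
  -- e ∈ C
  have heC : e ∈ C := by
    by_contra h
    have hCB : C ⊆ B := fun x hx => ((hC hx).resolve_left (fun hxe => h (hxe ▸ hx)))
    exact hCc.1.not_indep (hBbase.indep.subset hCB)
  have hCsubG : C ⊆ G := hCG ▸ M.subset_closure C hCc.1.subset_ground
  have heG : e ∈ G := hCsubG heC
  have hCeB : C \ {e} ⊆ B := fun x hx => ((hC hx.1).resolve_left hx.2)
  have hCei : M.Indep (C \ {e}) := hCc.2 e heC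
  have heCl : e ∈ M.closure (C \ {e}) := by
    rw [hCei.mem_closure_iff]
    left
    rw [insert_diff_singleton, insert_eq_of_mem heC]
    exact hCc.1
  have hclCe : M.closure (C \ {e}) = G := by
    rw [← hCG]
    refine subset_antisymm (M.closure_subset_closure diff_subset) ?_
    have hsub : C ⊆ M.closure (C \ {e}) := by
      intro x hx
      rcases eq_or_ne x e with rfl | h
      · exact heCl
      · exact M.subset_closure _ hCei.subset_ground ⟨hx, h⟩
    simpa using (M.closure_subset_closure hsub).trans (by rw [Matroid.closure_closure])
  have hCeIG : C \ {e} ⊆ IG := subset_inter (fun x hx => hCsubG hx.1) hCeB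
  have hCebasis : M.IsBasis (C \ {e}) G := hclCe ▸ hCei.isBasis_closure
  have hCeq : C \ {e} = IG := hCebasis.eq_of_subset_indep hIGi hCeIG hIGbasis.subset
  have hCform : C = insert e IG := by
    rw [← hCeq, insert_diff_singleton, insert_eq_of_mem heC]
  have heIG : e ∉ IG := fun h => heB h.2
  have hIFIG : IF ⊆ IG := inter_subset_inter_left _ hFG.subset
  have hIFne : IF ≠ IG := fun h => hFG.ne (by rw [← hFB, h, hGB])
  obtain ⟨x0, hx0IG, hx0IF⟩ : ∃ x, x ∈ IG ∧ x ∉ IF := by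
    by_contra h
    push_neg at h
    exact hIFne (subset_antisymm hIFIG h)
  have heF : e ∉ F := by
    intro heF
    have heIF : e ∉ IF := fun h => heB h.2
    have heclIF : e ∈ M.closure IF := by rw [hFB]; exact heF
    have hdep : M.Dep (insert e IF) := (hIFi.mem_closure_iff.mp heclIF).resolve_right heIF
    have hx0e : x0 ≠ e := fun h => heIG (h ▸ hx0IG)
    have hsub : insert e IF ⊆ C \ {x0} := by
      rw [hCform]
      intro y hy
      rcases hy with rfl | hy
      · exact ⟨mem_insert _ _, fun h => hx0e (by simpa using h.symm)⟩
      · exact ⟨Or.inr (hIFIG hy), fun h => hx0IF (mem_singleton_iff.mp h ▸ hy)⟩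
    have hx0C : x0 ∈ C := by rw [hCform]; exact Or.inr hx0IG
    exact hdep.not_indep ((hCc.2 x0 hx0C).subset hsub)
  set D := IG \ IF with hDdef
  have hDB : D ⊆ B := fun x hx => hx.1.2
  have heD : e ∉ D := fun h => heB (hDB h)
  have hDsub : D ⊆ G \ F := fun x hx => ⟨hx.1.1, fun hxF => hx.2 ⟨hxF, hx.1.2⟩⟩
  have hDunion : D ∪ IF = IG := diff_union_of_subset hIFIG
  have hDi : Q.Indep D := (hQI D).mpr ⟨hDsub, IF, hIFbasis, by rw [hDunion]; exact hIGi⟩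
  -- closure of D ∪ J is G for any basis J of F
  have hclDJ : ∀ J, M.IsBasis J F → M.closure (D ∪ J) = G := by
    intro J hJ
    have h1 : M.closure (D ∪ J) = M.closure (D ∪ IF) := by
      rw [← closure_union_closure_right_eq, hJ.closure_eq_closure,
        ← hIFbasis.closure_eq_closure, closure_union_closure_right_eq]
    rw [h1, hDunion, hGB]
  have key : ∀ J, M.IsBasis J F → ∀ x, x ∈ G → x ∉ F → x ∉ D →
      ¬ M.Indep (insert x (D ∪ J)) := by
    intro J hJ x hxG hxF hxD hind
    have hDJi : M.Indep (D ∪ J) := hind.subset (subset_insert _ _)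
    have hxDJ : x ∉ D ∪ J := by
      rintro (h | h)
      · exact hxD h
      · exact hxF (hJ.subset h)
    have hx : x ∈ M.closure (D ∪ J) := by rw [hclDJ J hJ]; exact hxG
    exact (hDJi.insert_dep_iff.mpr ⟨hx, hxDJ⟩).not_indep hind
  have hnotindep : ∀ x, x ∈ G → x ∉ F → x ∉ D → ¬ Q.Indep (insert x D) := by
    intro x hxG hxF hxD hQind
    obtain ⟨-, J, hJ, hind⟩ := (hQI _).mp hQind
    rw [insert_union] at hind
    exact key J hJ x hxG hxF hxD hind
  have hDbase : Q.IsBase D := by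
    refine hDi.isBase_of_forall_insert ?_
    intro x hx
    rw [hQE] at hx
    exact hnotindep x hx.1.1 hx.1.2 hx.2
  refine ⟨hDbase, ?_, ?_⟩
  · -- dependence of insert e D
    rw [dep_iff]
    constructor
    · exact hnotindep e heG heF heD
    · rw [hQE]
      exact insert_subset ⟨heG, heF⟩ hDsub
  · intro x hx
    rcases eq_or_ne x e with rfl | hxe
    · rw [insert_diff_self_of_notMem heD]
      exact hDi
    have hxD : x ∈ D := hx.resolve_left hxe
    have hxC : x ∈ C := by rw [hCform]; exact Or.inr hxD.1
    have hset : insert e D \ {x} = insert e (IG \ {x}) \ IF ∪ ∅ := by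
      rw [union_empty]
      ext y
      simp only [hDdef, mem_diff, mem_insert_iff, mem_singleton_iff]
      constructor
      · rintro ⟨rfl | ⟨hyIG, hyIF⟩, hyx⟩
        · exact ⟨Or.inl rfl, fun h => heF (hFB ▸ M.subset_closure IF (hIFi.subset_ground) h)⟩
        · exact ⟨Or.inr ⟨hyIG, hyx⟩, hyIF⟩
      · rintro ⟨rfl | ⟨hyIG, hyx⟩, hyIF⟩
        · exact ⟨Or.inl rfl, fun h => heIG (h ▸ hxD.1)⟩
        · exact ⟨Or.inr ⟨hyIG, hyIF⟩, hyx⟩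
    have hC_x : C \ {x} = insert e (IG \ {x}) := by
      rw [hCform]
      ext y
      simp only [mem_diff, mem_insert_iff, mem_singleton_iff]
      constructor
      · rintro ⟨rfl | h, hyx⟩
        · exact Or.inl rfl
        · exact Or.inr ⟨h, hyx⟩
      · rintro (rfl | ⟨h, hyx⟩)
        · exact ⟨Or.inl rfl, fun hh => heIG (hh ▸ hxD.1)⟩
        · exact ⟨Or.inr h, hyx⟩
    have hunion : insert e (D \ {x}) ∪ IF = C \ {x} := by
      rw [hC_x, hDdef, insert_union, diff_diff_comm, diff_union_self,
        union_eq_self_of_subset_right (subset_diff_singleton hIFIG hxD.2)]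
    refine (hQI _).mpr ⟨?_, IF, hIFbasis, ?_⟩
    · intro y hy
      rcases hy with ⟨rfl | hyD, hyx⟩
      · exact ⟨heG, heF⟩
      · exact hDsub hyD
    · have hDx : insert e D \ {x} = insert e (D \ {x}) := by
        rw [insert_diff_of_notMem _ (by simpa using (Ne.symm hxe))]
      rw [hDx, hunion]
      exact hCc.2 x hxC


end BergmanPaper
end

section
/- For any flag of flats F: ∅ = F_0 ⊂ F_1 ⊂ ⋯ ⊂ F_k ⊂ F_{k+1} = E of a matroid M on ground set E, the matroid M_F = ⊕_{i=1}^{k+1} (M|F_i)/F_{i−1} decomposes as a direct sum over the vertices v of the labelled forest T_F: M_F = ⊕_v ( F(v) / ⊕_{v' child of v} F(v') ), where the vertices of T_F are labelled by the connected components of the flats F_i. In particular, the labelled forest T_F determines the matroid M_F. -/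
open Set Matroid

namespace BergmanPaper

variable {α : Type*}

/-- every dependent set contains a circuit -/
lemma exists_mcircuit_of_dep {M : Matroid α} {D : Set α} (hD : M.Dep D) :
    ∃ K, K ⊆ D ∧ MCircuit M K := by
  obtain ⟨I, hI⟩ := M.exists_isBasis D hD.subset_ground
  obtain ⟨e, heD, heI⟩ : ∃ e ∈ D, e ∉ I := by
    by_contra h; push_neg at h
    exact hD.not_indep (hI.subset.antisymm h ▸ hI.indep)
  have hecl : e ∈ M.closure I := hI.subset_closure heD
  set S : Set (Set α) := {J | J ⊆ I ∧ e ∈ M.closure J} with hS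
  have hIS : I ∈ S := ⟨Subset.rfl, hecl⟩
  set K₀ : Set α := ⋂₀ S with hK₀
  have hK₀I : K₀ ⊆ I := sInter_subset_of_mem hIS
  have hK₀ind : M.Indep K₀ := hI.indep.subset hK₀I
  have heK₀ : e ∉ K₀ := fun h => heI (hK₀I h)
  have hecl₀ : e ∈ M.closure K₀ := by
    rw [hK₀, hI.indep.closure_sInter_eq_biInter_closure_of_forall_subset ⟨I, hIS⟩
      (fun J hJ => hJ.1)]
    exact mem_iInter₂.2 fun J hJ => hJ.2
  refine ⟨insert e K₀, insert_subset heD (hK₀I.trans hI.subset), ?_, ?_⟩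
  · exact hK₀ind.insert_dep_iff.2 ⟨hecl₀, heK₀⟩
  · rintro x (rfl | hxK)
    · rw [insert_diff_self_of_notMem heK₀]; exact hK₀ind
    · have hxe : x ≠ e := fun h => heK₀ (h ▸ hxK)
      rw [← insert_diff_singleton_comm (Ne.symm hxe)]
      have hind : M.Indep (K₀ \ {x}) := hK₀ind.subset diff_subset
      rw [hind.insert_indep_iff_of_notMem (show e ∉ K₀ \ {x} from fun h => heK₀ h.1)]
      refine ⟨M.closure_subset_ground I hecl, fun hmem => ?_⟩
      have : K₀ \ {x} ∈ S := ⟨diff_subset.trans hK₀I, hmem⟩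
      exact (sInter_subset_of_mem this hxK).2 rfl

/-- circuits of `M` inside `G` are circuits of the restriction, and conversely -/
lemma mcircuit_restrict_iff {M : Matroid α} {G K : Set α} (hG : G ⊆ M.E) :
    MCircuit (M ↾ G) K ↔ MCircuit M K ∧ K ⊆ G := by
  constructor
  · rintro ⟨hdep, hmin⟩
    rw [restrict_dep_iff] at hdep
    refine ⟨⟨⟨hdep.1, hdep.2.trans hG⟩, fun x hx => ((restrict_indep_iff.1 (hmin x hx)).1)⟩,
      hdep.2⟩
  · rintro ⟨⟨hdep, hmin⟩, hKG⟩
    exact ⟨restrict_dep_iff.2 ⟨hdep.not_indep, hKG⟩,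
      fun x hx => restrict_indep_iff.2 ⟨hmin x hx, diff_subset.trans hKG⟩⟩

lemma mcircuit_restrict_mono {M : Matroid α} {F F' K : Set α} (h : F ⊆ F')
    (hK : MCircuit (M ↾ F) K) : MCircuit (M ↾ F') K := by
  obtain ⟨hdep, hmin⟩ := hK
  rw [restrict_dep_iff] at hdep
  exact ⟨restrict_dep_iff.2 ⟨hdep.1, hdep.2.trans h⟩,
    fun x hx => restrict_indep_iff.2 ⟨(restrict_indep_iff.1 (hmin x hx)).1,
      diff_subset.trans (hdep.2.trans h)⟩⟩

lemma connTo_mono {M : Matroid α} {F F' : Set α} (h : F ⊆ F') {x y : α}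
    (hxy : ConnTo (M ↾ F) x y) : ConnTo (M ↾ F') x y :=
  Relation.ReflTransGen.mono (r := fun x y => ∃ C, MCircuit (M ↾ F) C ∧ x ∈ C ∧ y ∈ C)
    (p := fun x y => ∃ C, MCircuit (M ↾ F') C ∧ x ∈ C ∧ y ∈ C)
    (fun _ _ ⟨C, hC, h1, h2⟩ => ⟨C, mcircuit_restrict_mono h hC, h1, h2⟩) _ _ hxy

lemma connTo_symm {M : Matroid α} : Symmetric (ConnTo M) :=
  fun x y h => (@Relation.ReflTransGen.stdSymm _ _
    ⟨fun _ _ ⟨C, hC, h1, h2⟩ => ⟨C, hC, h2, h1⟩⟩).symm x y h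

lemma connTo_trans {M : Matroid α} {x y z : α} (h1 : ConnTo M x y) (h2 : ConnTo M y z) :
    ConnTo M x z := h1.trans h2

lemma IsCompOf.subset {M : Matroid α} {C F : Set α} (h : IsCompOf M C F) : C ⊆ F := by
  obtain ⟨e, he, rfl⟩ := h; exact fun x hx => hx.1

lemma IsCompOf.nonempty {M : Matroid α} {C F : Set α} (h : IsCompOf M C F) : C.Nonempty := by
  obtain ⟨e, he, rfl⟩ := h; exact ⟨e, he, Relation.ReflTransGen.refl⟩

lemma IsCompOf.mem_of_connTo {M : Matroid α} {C F : Set α} (h : IsCompOf M C F) {x y : α}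
    (hx : x ∈ C) (hy : y ∈ F) (hxy : ConnTo (M ↾ F) x y) : y ∈ C := by
  obtain ⟨e, he, rfl⟩ := h; exact ⟨hy, hx.2.trans hxy⟩

lemma IsCompOf.connTo {M : Matroid α} {C F : Set α} (h : IsCompOf M C F) {x y : α}
    (hx : x ∈ C) (hy : y ∈ C) : ConnTo (M ↾ F) x y := by
  obtain ⟨e, he, rfl⟩ := h; exact (connTo_symm hx.2).trans hy.2

lemma exists_isCompOf_mem {M : Matroid α} {F : Set α} {x : α} (hx : x ∈ F) :
    ∃ C, IsCompOf M C F ∧ x ∈ C :=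
  ⟨_, ⟨x, hx, rfl⟩, ⟨hx, Relation.ReflTransGen.refl⟩⟩

lemma IsCompOf.eq_of_mem {M : Matroid α} {C C' F : Set α} (h : IsCompOf M C F)
    (h' : IsCompOf M C' F) {x : α} (hx : x ∈ C) (hx' : x ∈ C') : C = C' := by
  ext y
  constructor
  · intro hy; exact h'.mem_of_connTo hx' (h.subset hy) (h.connTo hx hy)
  · intro hy; exact h.mem_of_connTo hx (h'.subset hy) (h'.connTo hx' hy)

/-- a set whose elements are pairwise connected, meeting a component, lies in it -/
lemma IsCompOf.superset_of_conn {M : Matroid α} {C F S : Set α} (h : IsCompOf M C F)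
    (hS : S ⊆ F) (hconn : ∀ a ∈ S, ∀ b ∈ S, ConnTo (M ↾ F) a b) {x : α}
    (hxS : x ∈ S) (hxC : x ∈ C) : S ⊆ C :=
  fun y hy => h.mem_of_connTo hxC (hS hy) (hconn x hxS y hy)

lemma mcircuit_subset_comp {M : Matroid α} {K G C : Set α} (hG : G ⊆ M.E)
    (hK : MCircuit M K) (hKG : K ⊆ G) (hC : IsCompOf M C G) {x : α}
    (hxK : x ∈ K) (hxC : x ∈ C) : K ⊆ C := by
  refine hC.superset_of_conn hKG (fun a ha b hb => ?_) hxK hxC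
  exact Relation.ReflTransGen.single ⟨K, (mcircuit_restrict_iff hG).2 ⟨hK, hKG⟩, ha, hb⟩

/-- a component of a smaller restriction lies inside a component of a bigger one it meets -/
lemma IsCompOf.subset_of_le {M : Matroid α} {C D F F' : Set α} (hFF' : F ⊆ F')
    (hD : IsCompOf M D F) (hC : IsCompOf M C F') {x : α} (hxD : x ∈ D) (hxC : x ∈ C) :
    D ⊆ C :=
  hC.superset_of_conn (hD.subset.trans hFF')
    (fun a ha b hb => connTo_mono hFF' (hD.connTo ha hb)) hxD hxC


/-- componentwise independence implies independence -/
lemma indep_of_forall_comp {M : Matroid α} {G X : Set α} (hG : G ⊆ M.E) (hXG : X ⊆ G)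
    (h : ∀ C, IsCompOf M C G → M.Indep (X ∩ C)) : M.Indep X := by
  by_contra hX
  obtain ⟨K, hKX, hK⟩ := exists_mcircuit_of_dep ⟨hX, hXG.trans hG⟩
  obtain ⟨x, hxK⟩ : K.Nonempty := by
    rcases K.eq_empty_or_nonempty with rfl | h
    · exact absurd M.empty_indep hK.1.not_indep
    · exact h
  obtain ⟨C, hC, hxC⟩ := exists_isCompOf_mem (hXG (hKX hxK))
  have hKC : K ⊆ C := mcircuit_subset_comp hG hK (hKX.trans hXG) hC hxK hxC
  exact hK.1.not_indep ((h C hC).subset (subset_inter hKX hKC))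

/-- Core lemma: the contraction decomposes over the components of `G`. -/
lemma minorIndep_iff_forall_comp {M : Matroid α} {F G : Set α} (hFG : F ⊆ G)
    (hG : G ⊆ M.E) (I : Set α) :
    minorIndep M G F (I ∩ (G \ F)) ↔
      ∀ C, IsCompOf M C G → minorIndep M C (F ∩ C) (I ∩ (C \ F)) := by
  have hdiff : ∀ C : Set α, C ⊆ G → C \ (F ∩ C) = C \ F := by
    intro C hC
    ext x; simp only [mem_diff, mem_inter_iff]; tauto
  constructor
  · rintro ⟨-, J, hJ, hIJ⟩ C hC
    have hJC : M.IsBasis (J ∩ C) (F ∩ C) := by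
      rw [isBasis_iff_indep_subset_closure]
      refine ⟨hJ.indep.subset inter_subset_left,
        inter_subset_inter_left _ hJ.subset, fun x hx => ?_⟩
      by_cases hxJ : x ∈ J ∩ C
      · exact M.subset_closure _ ((hJ.indep.subset inter_subset_left).subset_ground) hxJ
      have hxJ' : x ∉ J := fun h => hxJ ⟨h, hx.2⟩
      have hxcl : x ∈ M.closure J := hJ.subset_closure hx.1
      have hdep : M.Dep (insert x J) := hJ.indep.insert_dep_iff.2 ⟨hxcl, hxJ'⟩
      obtain ⟨K, hKsub, hK⟩ := exists_mcircuit_of_dep hdep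
      have hxK : x ∈ K := by
        by_contra hxK
        exact hK.1.not_indep (hJ.indep.subset fun y hy =>
          ((hKsub hy).resolve_left (fun h => hxK (h ▸ hy))))
      have hKG : K ⊆ G := hKsub.trans
        (insert_subset (hFG hx.1) (hJ.subset.trans hFG))
      have hKC : K ⊆ C := mcircuit_subset_comp hG hK hKG hC hxK hx.2
      have hKx : K \ {x} ⊆ J ∩ C := by
        intro y hy
        exact ⟨((hKsub hy.1).resolve_left hy.2), hKC hy.1⟩
      have hxclK : x ∈ M.closure (K \ {x}) := by
        have hind := hK.2 x hxK
        have : M.Dep (insert x (K \ {x})) := by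
          rw [insert_diff_singleton, insert_eq_of_mem hxK]; exact hK.1
        exact (hind.insert_dep_iff.1 this).1
      exact M.closure_subset_closure hKx hxclK
    refine ⟨fun x hx => ⟨hx.2.1, fun h => hx.2.2 h.1⟩, J ∩ C, hJC, hIJ.subset ?_⟩
    refine union_subset_union ?_ inter_subset_left
    exact fun x hx => ⟨hx.1, hC.subset hx.2.1, hx.2.2⟩
  · intro h
    have h' : ∀ C : Set α, IsCompOf M C G →
        ∃ J, M.IsBasis J (F ∩ C) ∧ M.Indep ((I ∩ (C \ F)) ∪ J) := fun C hC => (h C hC).2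
    choose! Jf hJf hIJf using h'
    set J : Set α := ⋃ C ∈ {C | IsCompOf M C G}, Jf C with hJdef
    have hJfC : ∀ C, IsCompOf M C G → Jf C ⊆ F ∩ C := fun C hC => (hJf C hC).subset
    have hJF : J ⊆ F := by
      rw [hJdef]
      exact iUnion₂_subset fun C hC => (hJfC C hC).trans inter_subset_left
    set X : Set α := (I ∩ (G \ F)) ∪ J with hXdef
    have hXG : X ⊆ G := union_subset (fun x hx => hx.2.1) (hJF.trans hFG)
    have hXC : ∀ C, IsCompOf M C G → X ∩ C = (I ∩ (C \ F)) ∪ Jf C := by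
      intro C hC
      rw [hXdef, union_inter_distrib_right]
      congr 1
      · ext x
        simp only [mem_inter_iff, mem_diff]
        exact ⟨fun hx => ⟨hx.1.1, hx.2, hx.1.2.2⟩,
          fun hx => ⟨⟨hx.1, hC.subset hx.2.1, hx.2.2⟩, hx.2.1⟩⟩
      · rw [hJdef]
        apply subset_antisymm
        · rw [iUnion₂_inter]
          refine iUnion₂_subset fun C' hC' => ?_
          rcases eq_or_ne C' C with rfl | hne
          · exact inter_subset_left
          · rintro x ⟨hx1, hx2⟩
            exact absurd (hC'.eq_of_mem hC ((hJfC C' hC') hx1).2 hx2) hne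
        · exact subset_inter (subset_biUnion_of_mem (show C ∈ {C | IsCompOf M C G} from hC))
            ((hJfC C hC).trans inter_subset_right)
    have hXind : M.Indep X := by
      refine indep_of_forall_comp hG hXG fun C hC => ?_
      rw [hXC C hC]; exact hIJf C hC
    have hJbasis : M.IsBasis J F := by
      rw [isBasis_iff_indep_subset_closure]
      refine ⟨hXind.subset subset_union_right, hJF, fun x hx => ?_⟩
      obtain ⟨C, hC, hxC⟩ := exists_isCompOf_mem (hFG hx)
      have : x ∈ M.closure (Jf C) := (hJf C hC).subset_closure ⟨hx, hxC⟩
      exact M.closure_subset_closure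
        (subset_biUnion_of_mem (show C ∈ {C | IsCompOf M C G} from hC)) this
    exact ⟨inter_subset_right, J, hJbasis, hXind⟩




lemma flagIndep_iff_comp (M : Matroid α) (k : ℕ) (Fl : Fin (k + 2) → Set α)
    (hFl : IsFlag M k Fl) (I : Set α) :
    flagIndep M k Fl I ↔ (I ⊆ M.E ∧ ∀ i : Fin (k + 1), ∀ C, IsCompOf M C (Fl i.succ) →
      minorIndep M C (Fl i.castSucc ∩ C) (I ∩ (C \ Fl i.castSucc))) := by
  unfold flagIndep
  refine and_congr_right fun hI => forall_congr' fun i => ?_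
  have hFG : Fl i.castSucc ⊆ Fl i.succ := le_of_lt (hFl.mono (Fin.castSucc_lt_succ (i := i)))
  have hG : Fl i.succ ⊆ M.E := hFl.last ▸ hFl.mono.monotone (Fin.le_last _)
  exact minorIndep_iff_forall_comp hFG hG I

lemma exists_min_level (M : Matroid α) (k : ℕ) (Fl : Fin (k + 2) → Set α)
    (hFl : IsFlag M k Fl) {C : Set α} (hC : C ∈ forestLabels M k Fl) :
    ∃ i : Fin (k + 1), IsCompOf M C (Fl i.succ) ∧
      (⋃₀ {D | D ∈ forestLabels M k Fl ∧ D ⊆ C ∧ D ≠ C} = Fl i.castSucc ∩ C) ∧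
      (∀ m : Fin (k + 2), IsCompOf M C (Fl m) → i.succ ≤ m) := by
  obtain ⟨j, hj⟩ := hC
  have hex : ∃ n : ℕ, ∃ h : n < k + 2, IsCompOf M C (Fl ⟨n, h⟩) :=
    ⟨j.val, j.isLt, by rwa [Fin.eta]⟩
  classical
  set n := Nat.find hex with hn
  obtain ⟨hlt, hcomp⟩ := Nat.find_spec hex
  have hn0 : n ≠ 0 := by
    intro h0
    obtain ⟨x, hx⟩ := hcomp.nonempty
    have hz : (⟨Nat.find hex, hlt⟩ : Fin (k + 2)) = 0 := Fin.ext h0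
    rw [hz, hFl.first] at hcomp
    exact absurd (hcomp.subset hx) (notMem_empty x)
  have hn1 : 1 ≤ n := Nat.one_le_iff_ne_zero.2 hn0
  refine ⟨⟨n - 1, by omega⟩, ?_, ?_, ?_⟩
  case refine_1 =>
    have : (⟨n - 1, by omega⟩ : Fin (k + 1)).succ = ⟨n, hlt⟩ := by
      apply Fin.ext; simp [Fin.val_succ]; omega
    rw [this]; exact hcomp
  case refine_3 =>
    intro m hm
    have : n ≤ m.val := Nat.find_min' hex ⟨m.isLt, by rwa [Fin.eta]⟩
    rw [Fin.le_def]; simp [Fin.val_succ]; omega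
  case refine_2 =>
    have hsucc : (⟨n - 1, by omega⟩ : Fin (k + 1)).succ = ⟨n, hlt⟩ := by
      apply Fin.ext; simp [Fin.val_succ]; omega
    have hcomp' : IsCompOf M C (Fl (⟨n - 1, by omega⟩ : Fin (k + 1)).succ) := by
      rw [hsucc]; exact hcomp
    have hcs : ((⟨n - 1, by omega⟩ : Fin (k + 1)).castSucc : Fin (k + 2)).val = n - 1 := rfl
    apply subset_antisymm
    · apply sUnion_subset
      rintro D ⟨⟨m, hm⟩, hDC, hne⟩
      rcases le_or_gt m.val (n - 1) with hle | hgt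
      · refine subset_inter (hm.subset.trans (hFl.mono.monotone ?_)) hDC
        rw [Fin.le_def, hcs]; exact hle
      · exfalso
        have hmn : (⟨n - 1, by omega⟩ : Fin (k + 1)).succ ≤ m := by
          rw [Fin.le_def]; simp [Fin.val_succ]; omega
        obtain ⟨x, hxD⟩ := hm.nonempty
        have hCD : C ⊆ D :=
          IsCompOf.subset_of_le (hFl.mono.monotone hmn) hcomp' hm (hDC hxD) hxD
        exact hne (subset_antisymm hDC hCD)
    · rintro x ⟨hxF, hxC⟩
      obtain ⟨D, hD, hxD⟩ := exists_isCompOf_mem (M := M) hxF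
      have hDC : D ⊆ C := IsCompOf.subset_of_le
        (le_of_lt (hFl.mono Fin.castSucc_lt_succ)) hD hcomp' hxD hxC
      have hne : D ≠ C := by
        rintro rfl
        have : n ≤ n - 1 :=
          Nat.find_min' hex ⟨(by omega : n - 1 < k + 2), by
            convert hD using 2; rfl⟩
        omega
      exact ⟨D, ⟨⟨_, hD⟩, hDC, hne⟩, hxD⟩

lemma flagIndep_iff_labels (M : Matroid α) (k : ℕ) (Fl : Fin (k + 2) → Set α)
    (hFl : IsFlag M k Fl) (I : Set α) :
    flagIndep M k Fl I ↔ (I ⊆ M.E ∧ ∀ C ∈ forestLabels M k Fl,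
      minorIndep M C (⋃₀ {D | D ∈ forestLabels M k Fl ∧ D ⊆ C ∧ D ≠ C})
        (I ∩ (C \ ⋃₀ {D | D ∈ forestLabels M k Fl ∧ D ⊆ C ∧ D ≠ C}))) := by
  rw [flagIndep_iff_comp M k Fl hFl I]
  refine and_congr_right fun hI => ⟨fun h C hC => ?_, fun h i C hC => ?_⟩
  · obtain ⟨i, hcomp, hU, -⟩ := exists_min_level M k Fl hFl hC
    rw [hU]
    have hCE : C \ (Fl i.castSucc ∩ C) = C \ Fl i.castSucc := by
      ext x; simp only [mem_diff, mem_inter_iff]; tauto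
    rw [hCE]
    exact h i C hcomp
  · have hCL : C ∈ forestLabels M k Fl := ⟨i.succ, hC⟩
    obtain ⟨i₀, hcomp₀, hU, hmin⟩ := exists_min_level M k Fl hFl hCL
    rcases eq_or_lt_of_le (hmin i.succ hC) with heq | hlt
    · have hii : i₀ = i := Fin.succ_injective _ heq
      subst hii
      specialize h C hCL
      rw [hU] at h
      have hCE : C \ (Fl i₀.castSucc ∩ C) = C \ Fl i₀.castSucc := by
        ext x; simp only [mem_diff, mem_inter_iff]; tauto
      rwa [hCE] at h
    · have hle : i₀.succ ≤ i.castSucc := by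
        rw [Fin.lt_def] at hlt
        rw [Fin.le_def]
        simp only [Fin.val_succ, Fin.coe_castSucc] at hlt ⊢
        omega
      have hsub : C ⊆ Fl i.castSucc := hcomp₀.subset.trans (hFl.mono.monotone hle)
      have h1 : Fl i.castSucc ∩ C = C := inter_eq_right.mpr hsub
      have h2 : C \ Fl i.castSucc = ∅ := diff_eq_empty.2 hsub
      rw [h1, h2, inter_empty]
      have hCE : C ⊆ M.E :=
        hcomp₀.subset.trans (hFl.last ▸ hFl.mono.monotone (Fin.le_last _))
      obtain ⟨J, hJ⟩ := M.exists_isBasis C hCE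
      exact ⟨empty_subset _, J, hJ, by rw [empty_union]; exact hJ.indep⟩


/-- the matroid `M_𝓕` of a flag decomposes as a direct sum over the vertices
of the forest `T_𝓕`; in particular the labelled forest determines `M_𝓕`. -/
theorem matroid_of_flag_decomposition (M : Matroid α) (k : ℕ)
    (Fl : Fin (k + 2) → Set α) (hFl : IsFlag M k Fl) :
    (∀ I, flagIndep M k Fl I ↔
      (I ⊆ M.E ∧ ∀ i : Fin (k + 1), ∀ C, IsCompOf M C (Fl i.succ) →
        minorIndep M C (Fl i.castSucc ∩ C) (I ∩ (C \ Fl i.castSucc)))) ∧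
    (∀ k' (Fl' : Fin (k' + 2) → Set α), IsFlag M k' Fl' →
      forestLabels M k Fl = forestLabels M k' Fl' →
      ∀ I, flagIndep M k Fl I ↔ flagIndep M k' Fl' I) := by
  refine ⟨flagIndep_iff_comp M k Fl hFl, ?_⟩
  intro k' Fl' hFl' hlab I
  rw [flagIndep_iff_labels M k Fl hFl I, flagIndep_iff_labels M k' Fl' hFl' I, hlab]


end BergmanPaper
end

section
/- Let F be a positive flat of an acyclic oriented matroid M. Then every connected component of F is also a positive flat of M. -/
open Set Matroid

namespace BergmanPaper

variable {α : Type*}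

/-- The support of a sign vector. -/
def SupportOf (X : α → SignType) : Set α := {a | X a ≠ 0}

/-- `Cs` is the set of signed circuits of an orientation of the matroid `M`. -/
structure IsOMCircuitSet (M : Matroid α) (Cs : Set (α → SignType)) : Prop where
  support_circuit : ∀ X ∈ Cs, MCircuit M (SupportOf X)
  circuit_support : ∀ C, MCircuit M C → ∃ X ∈ Cs, SupportOf X = C
  neg_mem : ∀ X ∈ Cs, (-X) ∈ Cs
  elimination : ∀ X ∈ Cs, ∀ Y ∈ Cs, X ≠ -Y → ∀ a, X a = SignType.pos →
    Y a = SignType.neg → ∃ Z ∈ Cs, Z a = SignType.zero ∧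
      (∀ b, Z b = SignType.pos → X b = SignType.pos ∨ Y b = SignType.pos) ∧
      (∀ b, Z b = SignType.neg → X b = SignType.neg ∨ Y b = SignType.neg)

/-- Sign-vector orthogonality. -/
def SOrth (X Y : α → SignType) : Prop :=
  (∃ a, X a * Y a = SignType.pos) ↔ (∃ a, X a * Y a = SignType.neg)

/-- A covector: a sign vector supported on the ground set, orthogonal to all circuits. -/
def IsCovector (M : Matroid α) (Cs : Set (α → SignType)) (Y : α → SignType) : Prop :=
  SupportOf Y ⊆ M.E ∧ ∀ X ∈ Cs, SOrth X Y

/-- A positive flat: the zero set of a positive covector. -/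
def IsPosFlat (M : Matroid α) (Cs : Set (α → SignType)) (F : Set α) : Prop :=
  M.IsFlat F ∧ ∃ Y, IsCovector M Cs Y ∧
    (∀ a ∈ M.E, Y a = SignType.zero ∨ Y a = SignType.pos) ∧
    F = {a | a ∈ M.E ∧ Y a = SignType.zero}

/-- Acyclicity: no positive signed circuit. -/
def OMAcyclic (Cs : Set (α → SignType)) : Prop :=
  ∀ X ∈ Cs, ∃ a, X a = SignType.neg

/-- The positive tope is simplicial: it has exactly rank-many facets, i.e. the number of
positive flats of corank one equals the rank. -/
noncomputable def PosTopeSimplicial (M : Matroid α) (Cs : Set (α → SignType)) : Prop :=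
  {H | IsPosFlat M Cs H ∧ mrank M H + 1 = mrank M M.E}.ncard = mrank M M.E

/-- Auxiliary: a flat can be recognized from closure containment. -/
lemma flat_of_closure_subset {M : Matroid α} {C : Set α}
    (hCE : C ⊆ M.E) (h : M.closure C ⊆ C) : M.IsFlat C := by
  refine ⟨fun I X hIC hIX => ?_, hCE⟩
  have h1 : X ⊆ M.closure I := hIX.subset_closure
  rw [hIC.closure_eq_closure] at h1
  exact h1.trans h

/-- Auxiliary: existence of a fundamental circuit. -/
lemma exists_fund_circuit {M : Matroid α} {C : Set α} {x : α}
    (hx : x ∈ M.closure C) (hxC : x ∉ C) (hCE : C ⊆ M.E) :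
    ∃ D, MCircuit M D ∧ x ∈ D ∧ D ⊆ insert x C := by
  obtain ⟨I, hI⟩ := M.exists_isBasis C hCE
  have hxI : x ∈ M.closure I := by rwa [hI.closure_eq_closure]
  have hxnI : x ∉ I := fun h => hxC (hI.subset h)
  have hxE : x ∈ M.E := M.closure_subset_ground C hx
  set J := {y ∈ I | x ∉ M.closure (I \ {y})} with hJdef
  have hJI : J ⊆ I := sep_subset _ _
  refine ⟨insert x J, ⟨?_, ?_⟩, mem_insert _ _,
    insert_subset_insert (hJI.trans hI.subset)⟩
  · -- `insert x J` is dependent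
    rw [Matroid.dep_iff]
    refine ⟨fun hind => ?_, insert_subset hxE (hJI.trans (hI.subset.trans hCE))⟩
    obtain ⟨B, hB, hJB⟩ := hind.subset_isBasis_of_subset
      (insert_subset_insert hJI) (insert_subset hxE (hI.subset.trans hCE))
    have hdep : M.Dep (insert x I) := hI.indep.insert_dep_iff.mpr ⟨hxI, hxnI⟩
    have hne : B ≠ insert x I := fun h => hdep.not_indep (h ▸ hB.indep)
    obtain ⟨y, hyXI, hyB⟩ : ∃ y, y ∈ insert x I ∧ y ∉ B := by
      by_contra h; push_neg at h
      exact hne (hB.subset.antisymm h)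
    have hyx : y ≠ x := fun h => hyB (h ▸ hJB (mem_insert _ _))
    have hyI : y ∈ I := hyXI.resolve_left hyx
    have hyJ : y ∉ J := fun h => hyB (hJB (mem_insert_of_mem _ h))
    have hxcl : x ∈ M.closure (I \ {y}) := by
      by_contra h; exact hyJ ⟨hyI, h⟩
    have hBsub : B ⊆ insert x (I \ {y}) := by
      intro b hb
      rcases hB.subset hb with rfl | hbI
      · exact mem_insert _ _
      · exact mem_insert_of_mem _ ⟨hbI, fun hb1 => hyB (by rwa [← hb1])⟩
    have hycl : y ∈ M.closure (I \ {y}) := by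
      have h1 : y ∈ M.closure B := hB.subset_closure (mem_insert_of_mem _ hyI)
      have h2 : M.closure B ⊆ M.closure (insert x (I \ {y})) :=
        M.closure_subset_closure hBsub
      have h3 : M.closure (insert x (I \ {y})) = M.closure (I \ {y}) :=
        closure_insert_eq_of_mem_closure hxcl
      exact h3 ▸ h2 h1
    exact hI.indep.notMem_closure_diff_of_mem hyI hycl
  · -- removing any element yields an independent set
    rintro z hz
    rcases eq_or_ne z x with rfl | hzx
    · rw [insert_diff_self_of_notMem (fun h => hxnI (hJI h))]
      exact hI.indep.subset hJI
    have hzJ : z ∈ J := hz.resolve_left hzx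
    rw [← insert_diff_singleton_comm hzx.symm]
    rw [(hI.indep.subset ((diff_subset_diff_left hJI).trans diff_subset)).insert_indep_iff_of_notMem
      (fun h => hxnI (hJI h.1))]
    refine ⟨hxE, fun hcon => hzJ.2 ?_⟩
    exact M.closure_subset_closure (diff_subset_diff_left hJI) hcon

/-- Auxiliary: circuits of an acyclic orientable matroid have at least two elements. -/
lemma circuit_nontrivial {M : Matroid α} {Cs : Set (α → SignType)}
    (hCs : IsOMCircuitSet M Cs) (hac : OMAcyclic Cs) {D : Set α}
    (hD : MCircuit M D) : ∃ a ∈ D, ∃ b ∈ D, a ≠ b := by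
  obtain ⟨X, hX, hsupp⟩ := hCs.circuit_support D hD
  obtain ⟨a, ha⟩ := hac X hX
  obtain ⟨b, hb⟩ := hac (-X) (hCs.neg_mem X hX)
  have hb' : X b = SignType.pos := by
    have h1 : -(X b) = SignType.neg := hb
    cases h : X b <;> rw [h] at h1 <;> first | rfl | exact absurd h1 (by decide)
  refine ⟨a, ?_, b, ?_, fun h => ?_⟩
  · rw [← hsupp]; exact fun h0 => by rw [ha] at h0; exact absurd h0 (by decide)
  · rw [← hsupp]; exact fun h0 => by rw [hb'] at h0; exact absurd h0 (by decide)
  · rw [h, hb'] at ha; exact absurd ha (by decide)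

/-- Auxiliary: a circuit inside a set restricts to a circuit of the restriction. -/
lemma mcircuit_restrict {M : Matroid α} {F D : Set α}
    (hD : MCircuit M D) (hDF : D ⊆ F) : MCircuit (M ↾ F) D := by
  refine ⟨?_, fun x hx => ?_⟩
  · rw [Matroid.restrict_dep_iff]; exact ⟨hD.1.not_indep, hDF⟩
  · rw [Matroid.restrict_indep_iff]
    exact ⟨hD.2 x hx, diff_subset.trans hDF⟩

/-- Auxiliary: a circuit inside `F` that meets a connected component of `M ↾ F` is
contained in it. -/
lemma circuit_subset_comp {M : Matroid α} {F D : Set α} {e a : α}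
    (hD : MCircuit M D) (hDF : D ⊆ F) (ha : a ∈ D)
    (hconn : ConnTo (M ↾ F) e a) : ∀ b ∈ D, ConnTo (M ↾ F) e b := by
  intro b hb
  exact hconn.tail ⟨D, mcircuit_restrict hD hDF, ha, hb⟩

/-- Auxiliary: each connected component of a flat is a flat (given no loops). -/
lemma comp_flat {M : Matroid α} {Cs : Set (α → SignType)}
    (hCs : IsOMCircuitSet M Cs) (hac : OMAcyclic Cs) {F C : Set α}
    (hF : M.IsFlat F) (hC : IsCompOf M C F) : M.IsFlat C := by
  obtain ⟨e, heF, rfl⟩ := hC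
  set C := {f | f ∈ F ∧ ConnTo (M ↾ F) e f} with hCdef
  have hCF : C ⊆ F := fun a ha => ha.1
  have hCE : C ⊆ M.E := hCF.trans hF.subset_ground
  refine flat_of_closure_subset hCE fun x hx => ?_
  by_cases hxC : x ∈ C
  · exact hxC
  have hxF : x ∈ F := by
    have := M.closure_subset_closure hCF hx
    rwa [hF.closure] at this
  obtain ⟨D, hD, hxD, hDsub⟩ := exists_fund_circuit hx hxC hCE
  obtain ⟨a, haD, b, hbD, hab⟩ := circuit_nontrivial hCs hac hD
  have hDF : D ⊆ F := hDsub.trans (insert_subset hxF hCF)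
  -- one of a, b lies in C
  obtain ⟨y, hyD, hyC⟩ : ∃ y ∈ D, y ∈ C := by
    rcases hDsub haD with rfl | haC
    · rcases hDsub hbD with rfl | hbC
      · exact absurd rfl hab
      · exact ⟨b, hbD, hbC⟩
    · exact ⟨a, haD, haC⟩
  exact ⟨hxF, circuit_subset_comp hD hDF hyD hyC.2 x hxD⟩

/-- every connected component of a positive flat of an acyclic oriented
matroid is a positive flat. -/
theorem component_of_positive_flat (M : Matroid α) (Cs : Set (α → SignType))
    (hCs : IsOMCircuitSet M Cs) (hac : OMAcyclic Cs)
    (F C : Set α) (hF : IsPosFlat M Cs F) (hC : IsCompOf M C F) :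
    IsPosFlat M Cs C := by
  classical
  obtain ⟨hFflat, Y, hYcov, hYpos, hFeq⟩ := hF
  have hCF : C ⊆ F := by
    obtain ⟨e, heF, rfl⟩ := hC
    exact fun a ha => ha.1
  have hCE : C ⊆ M.E := hCF.trans hFflat.subset_ground
  set Z : α → SignType :=
    fun a => if a ∈ C then 0 else if a ∈ F then SignType.pos else Y a with hZdef
  have hZC : ∀ a ∈ C, Z a = 0 := fun a ha => by simp [hZdef, ha]
  have hZF : ∀ a ∈ F, a ∉ C → Z a = SignType.pos := fun a haF haC => by
    simp [hZdef, haF, haC]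
  have hZout : ∀ a, a ∉ F → Z a = Y a := by
    intro a haF
    have haC : a ∉ C := fun h => haF (hCF h)
    simp [hZdef, haC, haF]
  refine ⟨comp_flat hCs hac hFflat hC, Z, ⟨?_, ?_⟩, ?_, ?_⟩
  · -- support of Z in ground set
    intro a ha
    by_cases haC : a ∈ C
    · exact absurd (hZC a haC) ha
    by_cases haF : a ∈ F
    · exact hFflat.subset_ground haF
    · exact hYcov.1 (by rwa [SupportOf, mem_setOf_eq, ← hZout a haF])
  · -- orthogonality with all circuits
    intro X hX
    have hDcirc : MCircuit M (SupportOf X) := hCs.support_circuit X hX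
    by_cases hsub : SupportOf X ⊆ F
    · by_cases hmeet : ∃ a ∈ SupportOf X, a ∈ C
      · -- the circuit lies inside the component: all products vanish
        obtain ⟨a, haD, haC⟩ := hmeet
        obtain ⟨e, heF, hCeq⟩ := hC
        have hsubC : ∀ b ∈ SupportOf X, b ∈ C := by
          intro b hb
          have := circuit_subset_comp hDcirc hsub haD
            (by rw [hCeq] at haC; exact haC.2) b hb
          rw [hCeq]; exact ⟨hsub hb, this⟩
        have hzero : ∀ a, X a * Z a = 0 := by
          intro a
          by_cases h : X a = 0
          · rw [h, zero_mul]
          · rw [hZC a (hsubC a h), mul_zero]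
        constructor
        · rintro ⟨a, ha⟩; rw [hzero] at ha; exact absurd ha (by decide)
        · rintro ⟨a, ha⟩; rw [hzero] at ha; exact absurd ha (by decide)
      · -- the circuit avoids the component; use acyclicity
        push_neg at hmeet
        obtain ⟨a, ha⟩ := hac X hX
        obtain ⟨b, hb⟩ := hac (-X) (hCs.neg_mem X hX)
        have hb' : X b = SignType.pos := by
          have h1 : -(X b) = SignType.neg := hb
          cases h : X b <;> rw [h] at h1 <;> first | rfl | exact absurd h1 (by decide)
        have haD : a ∈ SupportOf X := fun h0 => by
          rw [ha] at h0; exact absurd h0 (by decide)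
        have hbD : b ∈ SupportOf X := fun h0 => by
          rw [hb'] at h0; exact absurd h0 (by decide)
        refine iff_of_true ⟨b, ?_⟩ ⟨a, ?_⟩
        · rw [hb', hZF b (hsub hbD) (hmeet b hbD)]; rfl
        · rw [ha, hZF a (hsub haD) (hmeet a haD)]; rfl
    · -- the circuit leaves F; use orthogonality with Y
      obtain ⟨a, haD, haF⟩ := not_subset.mp hsub
      have haE : a ∈ M.E := hDcirc.1.subset_ground haD
      have hYa : Y a = SignType.pos := by
        rcases hYpos a haE with h | h
        · exact absurd (by rw [hFeq]; exact ⟨haE, h⟩) haF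
        · exact h
      have horth : SOrth X Y := hYcov.2 X hX
      have transfer : ∀ c s, s ≠ (0 : SignType) → X c * Y c = s → X c * Z c = s := by
        intro c s hs hc
        have hYc : Y c ≠ 0 := fun h => hs (by rw [← hc, h, mul_zero])
        have hcF : c ∉ F := fun hcF => hYc (by rw [hFeq] at hcF; exact hcF.2)
        rw [hZout c hcF]; exact hc
      have hboth : (∃ c, X c * Y c = SignType.pos) ∧ ∃ c, X c * Y c = SignType.neg := by
        cases hXa : X a with
        | zero => exact absurd hXa haD
        | pos =>
          have hp : X a * Y a = SignType.pos := by rw [hXa, hYa]; rfl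
          exact ⟨⟨a, hp⟩, horth.mp ⟨a, hp⟩⟩
        | neg =>
          have hn : X a * Y a = SignType.neg := by rw [hXa, hYa]; rfl
          exact ⟨horth.mpr ⟨a, hn⟩, ⟨a, hn⟩⟩
      obtain ⟨⟨c₁, hc₁⟩, ⟨c₂, hc₂⟩⟩ := hboth
      exact iff_of_true ⟨c₁, transfer c₁ _ (by decide) hc₁⟩
        ⟨c₂, transfer c₂ _ (by decide) hc₂⟩
  · -- positivity
    intro a haE
    by_cases haC : a ∈ C
    · exact Or.inl (hZC a haC)
    by_cases haF : a ∈ F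
    · exact Or.inr (hZF a haF haC)
    · rw [hZout a haF]; exact hYpos a haE
  · -- zero set is exactly C
    ext a
    constructor
    · intro haC
      exact ⟨hCE haC, hZC a haC⟩
    · rintro ⟨haE, hZ0⟩
      by_cases haC : a ∈ C
      · exact haC
      by_cases haF : a ∈ F
      · rw [hZF a haF haC] at hZ0; exact absurd hZ0 (by decide)
      · rw [hZout a haF] at hZ0
        exact absurd (by rw [hFeq]; exact ⟨haE, hZ0⟩) haF


end BergmanPaper
end
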